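/- For every ν ≥ 0, ν² + 2/π ≥ (ν·(2Φ(ν) - 1) + √(2/π)·e^{-ν²/2})². Equivalently, the folded normal variance g(μ, σ) = μ² + σ² - f(μ, σ)² satisfies g(μ, σ) ≥ g(0, σ) = σ²(1 - 2/π) for all μ > 0 and σ > 0. -/

import Mathlib

open Real MeasureTheory Set Filter

noncomputable def stdPhi (x : ℝ) : ℝ := (Real.sqrt (2 * Real.pi))⁻¹ * Real.exp (-x ^ 2 / 2)

noncomputable def stdCDF (x : ℝ) : ℝ := ∫ t in Set.Iic x, stdPhi t

lemma continuous_stdPhi : Continuous stdPhi := by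
  unfold stdPhi; fun_prop

lemma stdPhi_nonneg (x : ℝ) : 0 ≤ stdPhi x := by
  unfold stdPhi
  positivity

lemma stdPhi_le (x : ℝ) : stdPhi x ≤ (Real.sqrt (2 * Real.pi))⁻¹ := by
  unfold stdPhi
  have h1 : Real.exp (-x ^ 2 / 2) ≤ 1 := by
    rw [Real.exp_le_one_iff]; nlinarith [sq_nonneg x]
  have h2 : (0:ℝ) ≤ (Real.sqrt (2 * Real.pi))⁻¹ := by positivity
  nlinarith

lemma integrable_stdPhi : Integrable stdPhi := by
  have : Integrable (fun x : ℝ => Real.exp (-(1/2) * x ^ 2)) :=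
    integrable_exp_neg_mul_sq (by norm_num)
  have := this.const_mul (Real.sqrt (2 * Real.pi))⁻¹
  refine this.congr (Eventually.of_forall fun x => ?_)
  unfold stdPhi; ring_nf

lemma integral_stdPhi : ∫ t, stdPhi t = 1 := by
  unfold stdPhi
  rw [MeasureTheory.integral_const_mul]
  have : ∀ x : ℝ, Real.exp (-x ^ 2 / 2) = Real.exp (-(1/2) * x ^ 2) := by
    intro x; ring_nf
  simp_rw [this, integral_gaussian]
  rw [show Real.pi / (1/2) = 2 * Real.pi by ring]
  rw [inv_mul_cancel₀]
  positivity

lemma stdCDF_sub (a x : ℝ) : stdCDF x - stdCDF a = ∫ t in a..x, stdPhi t := by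
  unfold stdCDF
  rw [intervalIntegral.integral_Iic_sub_Iic integrable_stdPhi.integrableOn
    integrable_stdPhi.integrableOn]

lemma hasDerivAt_stdCDF (x : ℝ) : HasDerivAt stdCDF (stdPhi x) x := by
  have h : HasDerivAt (fun y => stdCDF 0 + ∫ t in (0:ℝ)..y, stdPhi t) (stdPhi x) x := by
    refine ((intervalIntegral.integral_hasDerivAt_right
      (integrable_stdPhi.intervalIntegrable)
      (continuous_stdPhi.aestronglyMeasurable.stronglyMeasurableAtFilter)
      continuous_stdPhi.continuousAt).const_add (stdCDF 0))
  refine h.congr_of_eventuallyEq (Eventually.of_forall fun y => ?_)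
  show stdCDF y = stdCDF 0 + ∫ t in (0:ℝ)..y, stdPhi t
  rw [← stdCDF_sub 0 y]; ring

lemma monotone_stdCDF : Monotone stdCDF := by
  intro a b hab
  have h := stdCDF_sub a b
  have h2 : 0 ≤ ∫ t in a..b, stdPhi t :=
    intervalIntegral.integral_nonneg hab fun x _ => stdPhi_nonneg x
  linarith

lemma stdCDF_zero : stdCDF 0 = 1 / 2 := by
  have heven : ∀ x : ℝ, stdPhi (-x) = stdPhi x := by
    intro x; unfold stdPhi; rw [neg_pow]; ring_nf
  have h1 : stdCDF 0 + ∫ t in Set.Ioi (0:ℝ), stdPhi t = 1 := by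
    rw [← integral_stdPhi]
    exact intervalIntegral.integral_Iic_add_Ioi integrable_stdPhi.integrableOn
      integrable_stdPhi.integrableOn
  have h2 : stdCDF 0 = ∫ t in Set.Ioi (0:ℝ), stdPhi t := by
    unfold stdCDF
    have := integral_comp_neg_Iic (c := (0:ℝ)) (f := stdPhi)
    rw [neg_zero] at this
    rw [← this]
    simp_rw [heven]
  linarith

lemma stdCDF_add_tail (x : ℝ) : stdCDF x + ∫ t in Set.Ioi x, stdPhi t = 1 := by
  rw [← integral_stdPhi]
  exact intervalIntegral.integral_Iic_add_Ioi integrable_stdPhi.integrableOn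
    integrable_stdPhi.integrableOn

lemma stdCDF_le_one (x : ℝ) : stdCDF x ≤ 1 := by
  have h := stdCDF_add_tail x
  have h2 : 0 ≤ ∫ t in Set.Ioi x, stdPhi t :=
    MeasureTheory.setIntegral_nonneg measurableSet_Ioi fun t _ => stdPhi_nonneg t
  linarith

lemma tendsto_stdCDF_atTop : Tendsto stdCDF atTop (nhds 1) := by
  rw [← integral_stdPhi]
  exact (MeasureTheory.aecover_Iic tendsto_id).integral_tendsto_of_countably_generated
    integrable_stdPhi

lemma hasDerivAt_stdPhi (x : ℝ) : HasDerivAt stdPhi (-x * stdPhi x) x := by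
  have h1 : HasDerivAt (fun y : ℝ => -y ^ 2 / 2) (-x) x := by
    have := ((hasDerivAt_pow 2 x).neg.div_const 2)
    refine this.congr_deriv ?_
    push_cast; ring
  have h2 := (h1.exp).const_mul (Real.sqrt (2 * Real.pi))⁻¹
  refine h2.congr_deriv ?_
  unfold stdPhi; ring

lemma tendsto_stdPhi_atTop : Tendsto stdPhi atTop (nhds 0) := by
  have h1 : Tendsto (fun x : ℝ => x ^ 2 / 2) atTop atTop :=
    (tendsto_pow_atTop two_ne_zero).atTop_div_const (by norm_num)
  have h2 : Tendsto (fun x : ℝ => Real.exp (-(x ^ 2 / 2))) atTop (nhds 0) :=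
    Real.tendsto_exp_neg_atTop_nhds_zero.comp h1
  have h3 := h2.const_mul (Real.sqrt (2 * Real.pi))⁻¹
  rw [mul_zero] at h3
  refine h3.congr fun x => ?_
  unfold stdPhi; ring_nf

lemma mills (x : ℝ) : x * stdPhi x / (x ^ 2 + 1) ≤ 1 - stdCDF x := by
  set D : ℝ → ℝ := fun y => 1 - stdCDF y - y * stdPhi y / (y ^ 2 + 1) with hD
  have hderiv : ∀ y : ℝ, HasDerivAt D (-2 * stdPhi y / (y ^ 2 + 1) ^ 2) y := by
    intro y
    have hden : (y ^ 2 + 1 : ℝ) ≠ 0 := by positivity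
    have h1 : HasDerivAt (fun z : ℝ => 1 - stdCDF z) (-stdPhi y) y :=
      ((hasDerivAt_stdCDF y).const_sub 1).congr_deriv (by ring)
    have hnum : HasDerivAt (fun z : ℝ => z * stdPhi z)
        (1 * stdPhi y + y * (-y * stdPhi y)) y :=
      (hasDerivAt_id y).mul (hasDerivAt_stdPhi y)
    have hden' : HasDerivAt (fun z : ℝ => z ^ 2 + 1) (2 * y) y := by
      have := (hasDerivAt_pow 2 y).add_const 1
      refine this.congr_deriv ?_; push_cast; ring
    have h2 := hnum.div hden' hden
    have h3 := h1.sub h2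
    refine h3.congr_deriv ?_
    field_simp
    ring
  have hanti : Antitone D := by
    refine antitone_of_deriv_nonpos (fun y => (hderiv y).differentiableAt) fun y => ?_
    rw [(hderiv y).deriv]
    have := stdPhi_nonneg y
    have : (0:ℝ) < (y ^ 2 + 1) ^ 2 := by positivity
    apply div_nonpos_of_nonpos_of_nonneg
    · nlinarith [stdPhi_nonneg y]
    · positivity
  have htend : Tendsto D atTop (nhds 0) := by
    have hQ : Tendsto (fun y => 1 - stdCDF y) atTop (nhds 0) := by
      have := tendsto_stdCDF_atTop.const_sub 1
      simpa using this
    have hfrac : Tendsto (fun y : ℝ => y * stdPhi y / (y ^ 2 + 1)) atTop (nhds 0) := by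
      refine tendsto_of_tendsto_of_tendsto_of_le_of_le'
        (tendsto_const_nhds) tendsto_stdPhi_atTop ?_ ?_
      · filter_upwards [eventually_ge_atTop (0:ℝ)] with y hy
        exact div_nonneg (mul_nonneg hy (stdPhi_nonneg y)) (by positivity)
      · filter_upwards [eventually_ge_atTop (0:ℝ)] with y hy
        rw [div_le_iff₀ (by positivity)]
        nlinarith [stdPhi_nonneg y, sq_nonneg (y - 1)]
    have := hQ.sub hfrac
    simpa using this
  have hle : ∀ᶠ y in atTop, D y ≤ D x := by
    filter_upwards [eventually_ge_atTop x] with y hy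
    exact hanti hy
  have := le_of_tendsto htend hle
  simpa [hD] using this

lemma stdPhi_zero : stdPhi 0 = (Real.sqrt (2 * Real.pi))⁻¹ := by
  unfold stdPhi; norm_num

lemma sqrt_two_div_pi : Real.sqrt (2 / Real.pi) = 2 * (Real.sqrt (2 * Real.pi))⁻¹ := by
  have hpi := Real.pi_pos
  have h : Real.sqrt (2 * Real.pi) ^ 2 = 2 * Real.pi := Real.sq_sqrt (by positivity)
  have hpos : 0 < Real.sqrt (2 * Real.pi) := Real.sqrt_pos.mpr (by positivity)
  rw [show (2:ℝ) / Real.pi = (2 * (Real.sqrt (2 * Real.pi))⁻¹) ^ 2 by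
    rw [mul_pow, inv_pow, h]; field_simp]
  exact Real.sqrt_sq (by positivity)

lemma stdCDF_le_lin {ν : ℝ} (hν : 0 ≤ ν) :
    stdCDF ν ≤ 1 / 2 + ν * (Real.sqrt (2 * Real.pi))⁻¹ := by
  have h1 : stdCDF ν - stdCDF 0 = ∫ t in (0:ℝ)..ν, stdPhi t := stdCDF_sub 0 ν
  have h2 : (∫ t in (0:ℝ)..ν, stdPhi t) ≤ ∫ _t in (0:ℝ)..ν, (Real.sqrt (2 * Real.pi))⁻¹ := by
    refine intervalIntegral.integral_mono_on hν
      integrable_stdPhi.intervalIntegrable (intervalIntegrable_const) fun x _ => stdPhi_le x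
  rw [intervalIntegral.integral_const, smul_eq_mul] at h2
  rw [stdCDF_zero] at h1
  have := h1.le.trans h2
  linarith

lemma exp_neg_le_quad {x : ℝ} (hx : 0 ≤ x) : Real.exp (-x) ≤ 1 - x + x ^ 2 / 2 := by
  set g : ℝ → ℝ := fun y => 1 - y + y ^ 2 / 2 - Real.exp (-y) with hg
  have hderiv : ∀ y : ℝ, HasDerivAt g (-1 + y + Real.exp (-y)) y := by
    intro y
    have h1 : HasDerivAt (fun z : ℝ => -z) (-1 : ℝ) y := (hasDerivAt_id y).neg
    have h2 := h1.exp
    have h3 : HasDerivAt (fun z : ℝ => 1 - z + z ^ 2 / 2) (-1 + y) y := by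
      have := (((hasDerivAt_pow 2 y).div_const 2).const_add (1 - y))
      have h4 := ((hasDerivAt_id y).const_sub 1).add ((hasDerivAt_pow 2 y).div_const 2)
      refine h4.congr_deriv ?_
      push_cast; ring
    refine (h3.sub h2).congr_deriv ?_
    ring
  have hmono : Monotone g := by
    refine monotone_of_deriv_nonneg (fun y => (hderiv y).differentiableAt) fun y => ?_
    rw [(hderiv y).deriv]
    have := Real.add_one_le_exp (-y)
    linarith
  have h0 : g 0 = 0 := by simp [hg]
  have := hmono hx
  rw [h0] at this
  simpa [hg] using this

lemma stdCDF_eight_tenths : stdCDF (4/5) ≤ 4/5 := by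
  have h1 : stdCDF (4/5) - stdCDF 0 = ∫ t in (0:ℝ)..(4/5), stdPhi t := stdCDF_sub 0 (4/5)
  have hub : ∀ t : ℝ, t ∈ Set.uIcc (0:ℝ) (4/5) →
      stdPhi t ≤ (Real.sqrt (2 * Real.pi))⁻¹ * (1 - t ^ 2 / 2 + (t ^ 2 / 2) ^ 2 / 2) := by
    intro t _
    unfold stdPhi
    have h := exp_neg_le_quad (x := t ^ 2 / 2) (by positivity)
    rw [show -t ^ 2 / 2 = -(t ^ 2 / 2) by ring]
    have hc : (0:ℝ) ≤ (Real.sqrt (2 * Real.pi))⁻¹ := by positivity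
    nlinarith
  have h2 : (∫ t in (0:ℝ)..(4/5), stdPhi t) ≤
      ∫ t in (0:ℝ)..(4/5), (Real.sqrt (2 * Real.pi))⁻¹ * (1 - t ^ 2 / 2 + (t ^ 2 / 2) ^ 2 / 2) := by
    refine intervalIntegral.integral_mono_on (by norm_num)
      integrable_stdPhi.intervalIntegrable ?_ fun x hx => hub x ?_
    · exact (Continuous.intervalIntegrable (by fun_prop) _ _)
    · exact Set.mem_uIcc_of_le hx.1 hx.2
  have h3 : (∫ t in (0:ℝ)..(4/5), (Real.sqrt (2 * Real.pi))⁻¹ * (1 - t ^ 2 / 2 + (t ^ 2 / 2) ^ 2 / 2))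
      = (Real.sqrt (2 * Real.pi))⁻¹ * (4/5 - (4/5) ^ 3 / 6 + (4/5) ^ 5 / 40) := by
    rw [intervalIntegral.integral_const_mul]
    congr 1
    have hF : ∀ t ∈ Set.uIcc (0:ℝ) (4/5), HasDerivAt (fun y : ℝ => y - y ^ 3 / 6 + y ^ 5 / 40)
        (1 - t ^ 2 / 2 + (t ^ 2 / 2) ^ 2 / 2) t := by
      intro t _
      have h4 := ((hasDerivAt_id t).sub ((hasDerivAt_pow 3 t).div_const 6)).add
        ((hasDerivAt_pow 5 t).div_const 40)
      refine h4.congr_deriv ?_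
      push_cast; ring
    rw [intervalIntegral.integral_eq_sub_of_hasDerivAt hF
      (Continuous.intervalIntegrable (by fun_prop) _ _)]
    norm_num
  have hsqrt : (2.45 : ℝ) ≤ Real.sqrt (2 * Real.pi) := by
    have h := Real.sq_sqrt (show (0:ℝ) ≤ 2 * Real.pi by positivity)
    have hpos : 0 < Real.sqrt (2 * Real.pi) := Real.sqrt_pos.mpr (by positivity)
    nlinarith [Real.pi_gt_d6]
  have hc : (Real.sqrt (2 * Real.pi))⁻¹ ≤ 1 / 2.45 := by
    have hpos : (0:ℝ) < 2.45 := by norm_num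
    have hpos2 : (0:ℝ) < Real.sqrt (2 * Real.pi) := lt_of_lt_of_le hpos hsqrt
    rw [inv_le_comm₀ hpos2 (by norm_num)] at *
    · exact le_trans (by norm_num) hsqrt
  rw [stdCDF_zero] at h1
  have hP : (0:ℝ) ≤ 4/5 - (4/5) ^ 3 / 6 + (4/5) ^ 5 / 40 := by norm_num
  have h5 : (Real.sqrt (2 * Real.pi))⁻¹ * (4/5 - (4/5) ^ 3 / 6 + (4/5) ^ 5 / 40) ≤ 3/10 := by
    calc (Real.sqrt (2 * Real.pi))⁻¹ * (4/5 - (4/5) ^ 3 / 6 + (4/5) ^ 5 / 40)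
        ≤ 1/2.45 * (4/5 - (4/5) ^ 3 / 6 + (4/5) ^ 5 / 40) := by
          exact mul_le_mul_of_nonneg_right hc hP
      _ ≤ 3/10 := by norm_num
  linarith [h1, h2.trans (le_of_eq h3) |>.trans h5]

lemma sqrt_twopi_ge : (2.5 : ℝ) ≤ Real.sqrt (2 * Real.pi) := by
  have h := Real.sq_sqrt (show (0:ℝ) ≤ 2 * Real.pi by positivity)
  have hpos : 0 < Real.sqrt (2 * Real.pi) := Real.sqrt_pos.mpr (by positivity)
  nlinarith [Real.pi_gt_d6]

lemma key_ineq {ν : ℝ} (hν : 0 ≤ ν) :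
    stdPhi ν * (2 * stdCDF ν - 1) ≤ 2 * ν * ((1 - stdCDF ν) * stdCDF ν) := by
  set c : ℝ := (Real.sqrt (2 * Real.pi))⁻¹ with hc
  set Φ : ℝ := stdCDF ν with hΦ
  set p : ℝ := stdPhi ν with hp
  have hp0 : 0 ≤ p := stdPhi_nonneg ν
  have hpc : p ≤ c := stdPhi_le ν
  have hccpos : (0:ℝ) < c := by
    rw [hc]; exact inv_pos.mpr (Real.sqrt_pos.mpr (by positivity))
  have hcle : c ≤ 2/5 := by
    rw [hc, inv_le_comm₀ (Real.sqrt_pos.mpr (by positivity)) (by norm_num)]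
    exact le_trans (by norm_num) sqrt_twopi_ge
  have hc2 : c ^ 2 = (2 * Real.pi)⁻¹ := by
    rw [hc, inv_pow, Real.sq_sqrt (by positivity)]
  have hΦhalf : 1/2 ≤ Φ := by
    rw [hΦ, ← stdCDF_zero]; exact monotone_stdCDF hν
  have hΦ1 : Φ ≤ 1 := stdCDF_le_one ν
  have hlin : Φ ≤ 1/2 + ν * c := stdCDF_le_lin hν
  rcases le_or_gt ν (4/5) with hcase | hcase
  · -- small ν
    have hQ : 1/5 ≤ 1 - Φ := by
      have : Φ ≤ stdCDF (4/5) := monotone_stdCDF hcase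
      have h8 := stdCDF_eight_tenths
      linarith
    have hQΦ : (4:ℝ)/25 ≤ (1 - Φ) * Φ := by nlinarith
    have hlhs : p * (2 * Φ - 1) ≤ 2 * ν * c ^ 2 := by
      have hm : 2 * Φ - 1 ≤ 2 * ν * c := by linarith
      have hm0 : 0 ≤ 2 * Φ - 1 := by linarith
      nlinarith
    have hpi : (25:ℝ) ≤ 8 * Real.pi := by nlinarith [Real.pi_gt_d6]
    have h2 : 2 * ν * c ^ 2 ≤ 2 * ν * (4/25) := by
      have : c ^ 2 ≤ 4/25 := by nlinarith
      nlinarith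
    nlinarith
  · -- large ν
    have hm2 : 2 * Φ - 1 ≤ ν ^ 2 := by
      have hm : 2 * Φ - 1 ≤ 2 * ν * c := by linarith
      have hm1 : 2 * Φ - 1 ≤ 1 := by linarith
      have h45 : 2 * Φ - 1 ≤ (4/5) * ν := by nlinarith
      nlinarith
    have hmills : ν * p ≤ (1 - Φ) * (ν ^ 2 + 1) := by
      have := mills ν
      rw [div_le_iff₀ (by positivity)] at this
      linarith
    have hm0 : 0 ≤ 2 * Φ - 1 := by linarith
    have hden : (0:ℝ) < ν ^ 2 + 1 := by positivity
    -- p * (2Φ-1) * (ν²+1) ≤ p * ν² * 2Φ ≤ ν * (νp) * 2Φ ≤ ν * (1-Φ)(ν²+1) * 2Φ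
    have step1 : p * (2 * Φ - 1) * (ν ^ 2 + 1) ≤ p * (ν ^ 2 * (2 * Φ)) := by
      nlinarith
    have step2 : p * (ν ^ 2 * (2 * Φ)) ≤ ν * ((1 - Φ) * (ν ^ 2 + 1)) * (2 * Φ) := by
      have h2Φ : 0 ≤ 2 * Φ := by linarith
      have := mul_le_mul_of_nonneg_right hmills h2Φ
      nlinarith
    have := step1.trans step2
    rw [← sub_nonneg]
    have h3 : (2 * ν * ((1 - Φ) * Φ) - p * (2 * Φ - 1)) * (ν ^ 2 + 1) =
        ν * ((1 - Φ) * (ν ^ 2 + 1)) * (2 * Φ) - p * (2 * Φ - 1) * (ν ^ 2 + 1) := by ring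
    have h4 : 0 ≤ (2 * ν * ((1 - Φ) * Φ) - p * (2 * Φ - 1)) * (ν ^ 2 + 1) := by
      rw [h3]; linarith
    exact (mul_nonneg_iff_of_pos_right hden).mp h4

lemma two_stdPhi (x : ℝ) :
    Real.sqrt (2 / Real.pi) * Real.exp (-x ^ 2 / 2) = 2 * stdPhi x := by
  unfold stdPhi
  rw [sqrt_two_div_pi]
  ring

lemma hasDerivAt_hfun (x : ℝ) :
    HasDerivAt (fun ν : ℝ => ν * (2 * stdCDF ν - 1) +
      Real.sqrt (2 / Real.pi) * Real.exp (-ν ^ 2 / 2)) (2 * stdCDF x - 1) x := by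
  have h1 : HasDerivAt (fun ν : ℝ => ν * (2 * stdCDF ν - 1))
      (1 * (2 * stdCDF x - 1) + x * (2 * stdPhi x)) x :=
    (hasDerivAt_id x).mul (((hasDerivAt_stdCDF x).const_mul 2).sub_const 1)
  have h2 : HasDerivAt (fun ν : ℝ => -ν ^ 2 / 2) (-x) x := by
    have := ((hasDerivAt_pow 2 x).neg.div_const 2)
    refine this.congr_deriv ?_
    push_cast; ring
  have h3 := (h2.exp).const_mul (Real.sqrt (2 / Real.pi))
  have h4 := h1.add h3
  refine h4.congr_deriv ?_
  have h5 := two_stdPhi x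
  linear_combination (-x) * h5

lemma main_ineq {ν : ℝ} (hν : 0 ≤ ν) :
    (ν * (2 * stdCDF ν - 1) + Real.sqrt (2 / Real.pi) * Real.exp (-ν ^ 2 / 2)) ^ 2
      ≤ ν ^ 2 + 2 / Real.pi := by
  set h : ℝ → ℝ := fun ν => ν * (2 * stdCDF ν - 1) +
    Real.sqrt (2 / Real.pi) * Real.exp (-ν ^ 2 / 2) with hh
  set F : ℝ → ℝ := fun ν => ν ^ 2 + 2 / Real.pi - h ν ^ 2 with hF
  have hFderiv : ∀ x : ℝ, HasDerivAt F (2 * x - 2 * h x * (2 * stdCDF x - 1)) x := by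
    intro x
    have h1 : HasDerivAt (fun ν : ℝ => ν ^ 2 + 2 / Real.pi) (2 * x) x := by
      have := (hasDerivAt_pow 2 x).add_const (2 / Real.pi)
      refine this.congr_deriv ?_; push_cast; ring
    have h2 := ((hasDerivAt_hfun x).pow 2)
    have h3 := h1.sub h2
    refine h3.congr_deriv ?_
    push_cast; ring
  have hmono : MonotoneOn F (Set.Ici 0) := by
    refine monotoneOn_of_deriv_nonneg (convex_Ici 0)
      ((continuous_iff_continuousAt.mpr fun x =>
        (hFderiv x).differentiableAt.continuousAt).continuousOn)
      (fun x _ => (hFderiv x).differentiableAt.differentiableWithinAt)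
      fun x hx => ?_
    rw [interior_Ici] at hx
    rw [(hFderiv x).deriv]
    have hx0 : (0:ℝ) ≤ x := le_of_lt hx
    have hkey := key_ineq hx0
    have hid : h x = x * (2 * stdCDF x - 1) + 2 * stdPhi x := by
      rw [hh]; simp only; rw [two_stdPhi]
    rw [hid]
    set Φ : ℝ := stdCDF x
    set p : ℝ := stdPhi x
    nlinarith [hkey]
  have hF0 : F 0 = 0 := by
    have h0 : h 0 = Real.sqrt (2 / Real.pi) := by
      rw [hh]; norm_num
    rw [hF]; simp only
    rw [h0, Real.sq_sqrt (by positivity)]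
    ring
  have := hmono (Set.self_mem_Ici) hν hν
  rw [hF0] at this
  have : 0 ≤ F ν := this
  rw [hF] at this
  simp only at this
  linarith

noncomputable def foldedNormalMean (μ σ : ℝ) : ℝ :=
  σ * Real.sqrt (2 / Real.pi) * Real.exp (-μ ^ 2 / (2 * σ ^ 2)) +
    μ * (2 * stdCDF (μ / σ) - 1)

noncomputable def foldedNormalVar (μ σ : ℝ) : ℝ := μ ^ 2 + σ ^ 2 - (foldedNormalMean μ σ) ^ 2

theorem foldedNormal_variance_lower_bound :
    (∀ ν : ℝ, 0 ≤ ν →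
        ν ^ 2 + 2 / Real.pi ≥
          (ν * (2 * stdCDF ν - 1) + Real.sqrt (2 / Real.pi) * Real.exp (-ν ^ 2 / 2)) ^ 2) ∧
    (∀ μ σ : ℝ, 0 < μ → 0 < σ →
        foldedNormalVar μ σ ≥ σ ^ 2 * (1 - 2 / Real.pi)) := by
  constructor
  · intro ν hν
    exact main_ineq hν
  · intro μ σ hμ hσ
    set ν : ℝ := μ / σ with hν
    have hν0 : 0 ≤ ν := le_of_lt (div_pos hμ hσ)
    have hexp : -μ ^ 2 / (2 * σ ^ 2) = -ν ^ 2 / 2 := by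
      rw [hν]; field_simp
    have hμν : μ = σ * ν := by
      rw [hν]; field_simp
    have hmean : foldedNormalMean μ σ =
        σ * (ν * (2 * stdCDF ν - 1) + Real.sqrt (2 / Real.pi) * Real.exp (-ν ^ 2 / 2)) := by
      unfold foldedNormalMean
      rw [hexp]
      rw [show μ * (2 * stdCDF (μ / σ) - 1) = σ * ν * (2 * stdCDF ν - 1) by
        rw [← hν, ← hμν]]
      ring
    have hmain := main_ineq hν0
    unfold foldedNormalVar
    rw [hmean]
    have hσ2 : (0:ℝ) < σ ^ 2 := by positivity
    rw [ge_iff_le, mul_pow]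
    have h2 := mul_le_mul_of_nonneg_left hmain (le_of_lt hσ2)
    have hμ2 : μ ^ 2 = σ ^ 2 * ν ^ 2 := by rw [hμν]; ring
    nlinarith
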